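/- The ring of invariants of SL(2,ℂ) under the right action of the unipotent subgroup N of upper triangular matrices with 1's on the diagonal (acting by right multiplication) is the polynomial ring freely generated by the matrix entries x₁₁ and x₂₁. -/

import Mathlib

/-- Membership in the maximal unipotent subgroup `N` of upper triangular
matrices with 1's on the diagonal, inside `SL(2,ℂ)`. -/
def IsUnipotentUpper (u : Matrix.SpecialLinearGroup (Fin 2) ℂ) : Prop :=
  (u : Matrix (Fin 2) (Fin 2) ℂ) 0 0 = 1 ∧
  (u : Matrix (Fin 2) (Fin 2) ℂ) 1 1 = 1 ∧
  (u : Matrix (Fin 2) (Fin 2) ℂ) 1 0 = 0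

/-!
An `N`-invariant function only depends on the first column `(a, c)` of `g`, which ranges over
`ℂ² ∖ {0}`. Moving `g` by `N` to `!![a, 0; c, a⁻¹]` resp. `!![a, -c⁻¹; c, 0]` shows that
`a ^ m * f = S(a, c)` where `a ≠ 0` and `c ^ n * f = R(a, c)` where `c ≠ 0`, for polynomials
`R` and `S`. Comparing on the torus, `a ^ m * R = c ^ n * S`; as `a` and `c` are non-associated
primes, `R = c ^ n * Q` and `S = a ^ m * Q`, so `f` is the polynomial `Q` on both charts.
-/

open Matrix.SpecialLinearGroup
open scoped MatrixGroups

namespace MvPolynomial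

theorem funext_of_forall_ne_zero {R σ : Type*} [CommRing R] [IsDomain R] [Infinite R]
    {p q : MvPolynomial σ R} (h : ∀ x : σ → R, (∀ i, x i ≠ 0) → eval x p = eval x q) :
    p = q :=
  funext_set (fun _ => {0}ᶜ) (fun _ => (Set.finite_singleton 0).infinite_compl)
    fun x hx => h x fun i => hx i trivial

theorem exists_eval_eq_pow_mul_eval_div_pow {K σ ι : Type*} [Field K] (j : ι)
    (p : σ → MvPolynomial ι K) (k : σ → ℕ) (P : MvPolynomial σ K) :
    ∃ (R : MvPolynomial ι K) (n : ℕ), ∀ v : ι → K, v j ≠ 0 →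
      eval v R = v j ^ n * eval (fun s => eval v (p s) / v j ^ k s) P := by
  induction P using MvPolynomial.induction_on with
  | C c => exact ⟨C c, 0, fun v _ => by simp⟩
  | add P₁ P₂ ih₁ ih₂ =>
    obtain ⟨R₁, n₁, h₁⟩ := ih₁
    obtain ⟨R₂, n₂, h₂⟩ := ih₂
    refine ⟨R₁ * X j ^ n₂ + R₂ * X j ^ n₁, n₁ + n₂, fun v hv => ?_⟩
    simp only [map_add, map_mul, map_pow, eval_X, h₁ v hv, h₂ v hv]
    ring
  | mul_X P s ih =>
    obtain ⟨R, n, h⟩ := ih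
    refine ⟨R * p s, n + k s, fun v hv => ?_⟩
    simp only [map_mul, eval_X, h v hv]
    field_simp
    ring

theorem exists_eq_X_pow_mul_of_X_pow_mul_eq {R ι : Type*} [CommRing R] [IsDomain R]
    {i j : ι} (hij : i ≠ j) {m n : ℕ} {A B : MvPolynomial ι R}
    (h : X i ^ m * A = X j ^ n * B) : ∃ Q, A = X j ^ n * Q ∧ B = X i ^ m * Q := by
  have hj : ¬ X j ∣ (X i ^ m : MvPolynomial ι R) := fun hdvd =>
    hij (X_dvd_X.mp (X_prime.dvd_of_dvd_pow hdvd)).symm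
  obtain ⟨Q, rfl⟩ := X_prime.pow_dvd_of_dvd_mul_left n hj ⟨B, h⟩
  refine ⟨Q, rfl, mul_left_cancel₀ (pow_ne_zero n (X_ne_zero j)) ?_⟩
  rw [← h]
  ring

end MvPolynomial

namespace Matrix.SpecialLinearGroup

variable {K : Type*} [Field K]

def lowerOfCol (v : Fin 2 → K) (hv : v 0 ≠ 0) : SL(2, K) :=
  ⟨!![v 0, 0; v 1, (v 0)⁻¹], by simp [hv]⟩

def antidiagOfCol (v : Fin 2 → K) (hv : v 1 ≠ 0) : SL(2, K) :=
  ⟨!![v 0, -(v 1)⁻¹; v 1, 0], by simp [hv]⟩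

theorem lowerOfCol_col (v : Fin 2 → K) (hv : v 0 ≠ 0) :
    (fun i => (lowerOfCol v hv : Matrix (Fin 2) (Fin 2) K) i 0) = v := by
  ext i
  fin_cases i <;> rfl

theorem antidiagOfCol_col (v : Fin 2 → K) (hv : v 1 ≠ 0) :
    (fun i => (antidiagOfCol v hv : Matrix (Fin 2) (Fin 2) K) i 0) = v := by
  ext i
  fin_cases i <;> rfl

theorem col_zero_ne_zero (g : SL(2, K)) :
    (g : Matrix (Fin 2) (Fin 2) K) 0 0 ≠ 0 ∨ (g : Matrix (Fin 2) (Fin 2) K) 1 0 ≠ 0 := by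
  by_contra! h
  have hdet := g.det_coe
  rw [Matrix.det_fin_two, h.1, h.2] at hdet
  simp at hdet

end Matrix.SpecialLinearGroup

theorem isUnipotentUpper_of_col {u : SL(2, ℂ)} (h₀ : (u : Matrix (Fin 2) (Fin 2) ℂ) 0 0 = 1)
    (h₁ : (u : Matrix (Fin 2) (Fin 2) ℂ) 1 0 = 0) : IsUnipotentUpper u := by
  have hdet := u.det_coe
  rw [Matrix.det_fin_two, h₀, h₁] at hdet
  exact ⟨h₀, by simpa using hdet, h₁⟩

theorem col_mul_of_isUnipotentUpper (g : SL(2, ℂ)) {u : SL(2, ℂ)} (hu : IsUnipotentUpper u) :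
    (fun i => ((g * u : SL(2, ℂ)) : Matrix (Fin 2) (Fin 2) ℂ) i 0) =
      fun i => (g : Matrix (Fin 2) (Fin 2) ℂ) i 0 := by
  ext i
  simp [Matrix.mul_apply, Fin.sum_univ_two, hu.1, hu.2.2]

theorem exists_isUnipotentUpper_mul_eq {g g' : SL(2, ℂ)}
    (h : (fun i => (g : Matrix (Fin 2) (Fin 2) ℂ) i 0) =
      fun i => (g' : Matrix (Fin 2) (Fin 2) ℂ) i 0) :
    ∃ u, IsUnipotentUpper u ∧ g * u = g' := by
  have hcol : ∀ i, ((g⁻¹ * g' : SL(2, ℂ)) : Matrix (Fin 2) (Fin 2) ℂ) i 0 =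
      (1 : Matrix (Fin 2) (Fin 2) ℂ) i 0 := fun i => by
    rw [← coe_one, ← inv_mul_cancel g, coe_mul, coe_mul, Matrix.mul_apply, Matrix.mul_apply]
    simp only [congrFun h]
  refine ⟨g⁻¹ * g', isUnipotentUpper_of_col ?_ ?_, mul_inv_cancel_left g g'⟩
  · simpa using hcol 0
  · simpa using hcol 1

theorem apply_eq_of_col_eq {f : SL(2, ℂ) → ℂ}
    (hf : ∀ g u, IsUnipotentUpper u → f (g * u) = f g) {g g' : SL(2, ℂ)}
    (h : (fun i => (g : Matrix (Fin 2) (Fin 2) ℂ) i 0) =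
      fun i => (g' : Matrix (Fin 2) (Fin 2) ℂ) i 0) :
    f g = f g' := by
  obtain ⟨u, hu, rfl⟩ := exists_isUnipotentUpper_mul_eq h
  exact (hf g u hu).symm

open MvPolynomial

section Invariants

variable {f : SL(2, ℂ) → ℂ} {P : MvPolynomial (Fin 2 × Fin 2) ℂ}

theorem exists_eval_col_eq_pow_mul_of_invariant
    (hP : ∀ g : SL(2, ℂ), f g = eval (fun p => (g : Matrix (Fin 2) (Fin 2) ℂ) p.1 p.2) P)
    (hf : ∀ g u, IsUnipotentUpper u → f (g * u) = f g) (j : Fin 2) :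
    ∃ (R : MvPolynomial (Fin 2) ℂ) (n : ℕ),
      ∀ g : SL(2, ℂ), (g : Matrix (Fin 2) (Fin 2) ℂ) j 0 ≠ 0 →
        eval (fun i => (g : Matrix (Fin 2) (Fin 2) ℂ) i 0) R =
          (g : Matrix (Fin 2) (Fin 2) ℂ) j 0 ^ n * f g := by
  -- Entry `s` of `lowerOfCol v` resp. `antidiagOfCol v` is `eval v (p s) / v j ^ k s`.
  match j with
  | 0 =>
    obtain ⟨R, n, hR⟩ := exists_eval_eq_pow_mul_eval_div_pow (0 : Fin 2)
      (fun s => !![X 0, 0; X 1, 1] s.1 s.2) (fun s => !![0, 0; 0, 1] s.1 s.2) P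
    refine ⟨R, n, fun g hg => ?_⟩
    set v : Fin 2 → ℂ := fun i => (g : Matrix (Fin 2) (Fin 2) ℂ) i 0
    rw [hR v hg, apply_eq_of_col_eq hf (lowerOfCol_col v hg).symm, hP]
    congr
    funext s
    fin_cases s <;> simp [lowerOfCol]
  | 1 =>
    obtain ⟨R, n, hR⟩ := exists_eval_eq_pow_mul_eval_div_pow (1 : Fin 2)
      (fun s => !![X 0, -1; X 1, 0] s.1 s.2) (fun s => !![0, 1; 0, 0] s.1 s.2) P
    refine ⟨R, n, fun g hg => ?_⟩
    set v : Fin 2 → ℂ := fun i => (g : Matrix (Fin 2) (Fin 2) ℂ) i 0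
    rw [hR v hg, apply_eq_of_col_eq hf (antidiagOfCol_col v hg).symm, hP]
    congr
    funext s
    fin_cases s <;> simp [antidiagOfCol, neg_div]

theorem exists_eval_col_of_invariant
    (hP : ∀ g : SL(2, ℂ), f g = eval (fun p => (g : Matrix (Fin 2) (Fin 2) ℂ) p.1 p.2) P)
    (hf : ∀ g u, IsUnipotentUpper u → f (g * u) = f g) :
    ∃ Q : MvPolynomial (Fin 2) ℂ, ∀ g : SL(2, ℂ),
      f g = eval (fun i => (g : Matrix (Fin 2) (Fin 2) ℂ) i 0) Q := by
  obtain ⟨S, m, hS⟩ := exists_eval_col_eq_pow_mul_of_invariant hP hf 0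
  obtain ⟨R, n, hR⟩ := exists_eval_col_eq_pow_mul_of_invariant hP hf 1
  have hRS : X 0 ^ m * R = X 1 ^ n * S := funext_of_forall_ne_zero fun v hv => by
    have hR' := hR (lowerOfCol v (hv 0)) (hv 1)
    have hS' := hS (lowerOfCol v (hv 0)) (hv 0)
    rw [lowerOfCol_col] at hR' hS'
    simp only [map_mul, map_pow, eval_X, hR', hS']
    change v 0 ^ m * (v 1 ^ n * _) = v 1 ^ n * (v 0 ^ m * _)
    ring
  obtain ⟨Q, rfl, rfl⟩ := exists_eq_X_pow_mul_of_X_pow_mul_eq (by decide) hRS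
  refine ⟨Q, fun g => ?_⟩
  rcases col_zero_ne_zero g with hg | hg
  · have hSg := hS g hg
    rw [map_mul, map_pow, eval_X] at hSg
    exact (mul_left_cancel₀ (pow_ne_zero m hg) hSg).symm
  · have hRg := hR g hg
    rw [map_mul, map_pow, eval_X] at hRg
    exact (mul_left_cancel₀ (pow_ne_zero n hg) hRg).symm

end Invariants

theorem injective_eval_col {K : Type*} [Field K] [Infinite K] :
    Function.Injective fun (Q : MvPolynomial (Fin 2) K) (g : SL(2, K)) =>
      eval (fun i => (g : Matrix (Fin 2) (Fin 2) K) i 0) Q :=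
  fun Q₁ Q₂ h => funext_of_forall_ne_zero fun v hv => by
    simpa only [lowerOfCol_col] using congrFun h (lowerOfCol v (hv 0))

/-- The ring of invariants of `SL(2,ℂ)` under right multiplication by `N` is the
polynomial ring freely generated by the entries `x₁₁` and `x₂₁`: a regular
(polynomial) function on `SL(2,ℂ)` is `N`-invariant iff it is a polynomial in
the first-column entries, and distinct polynomials in `x₁₁, x₂₁` give distinct
functions. -/
theorem invariants_SL2_unipotent :
    (∀ f : Matrix.SpecialLinearGroup (Fin 2) ℂ → ℂ,
      (∃ P : MvPolynomial (Fin 2 × Fin 2) ℂ,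
        ∀ g, f g = MvPolynomial.eval
          (fun p => (g : Matrix (Fin 2) (Fin 2) ℂ) p.1 p.2) P) →
      ((∀ g u, IsUnipotentUpper u → f (g * u) = f g) ↔
        ∃ Q : MvPolynomial (Fin 2) ℂ,
          ∀ g, f g = MvPolynomial.eval
            (fun i => (g : Matrix (Fin 2) (Fin 2) ℂ) i 0) Q)) ∧
    Function.Injective (fun Q : MvPolynomial (Fin 2) ℂ =>
      (fun g : Matrix.SpecialLinearGroup (Fin 2) ℂ =>
        MvPolynomial.eval (fun i => (g : Matrix (Fin 2) (Fin 2) ℂ) i 0) Q)) := by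
  refine ⟨fun f ⟨P, hP⟩ => ⟨exists_eval_col_of_invariant hP, ?_⟩, injective_eval_col⟩
  rintro ⟨Q, hQ⟩ g u hu
  rw [hQ, hQ, col_mul_of_isUnipotentUpper g hu]
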